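/- arXiv:2603.21259 — 2 statements merged into one kernel-verified Lean document; each statement's English description precedes it below -/
import Mathlib

section
/- Suppose n, m, k are non-negative integers with m > 0, 2 ≤ b ≤ 10, d is the number of base-b digits of L_k, and L_n = F_m·b^d + L_k. Then m + k - 5 < n < m + k + 7·log b. -/
/-!
Since `L_k` has exactly `d` digits in base `b`, we have `L_k < b ^ d ≤ b L_k`, so the
concatenation identity gives `F_m L_k < L_n ≤ (b + 1) F_m L_k`. Both Fibonacci and Lucas
numbers are squeezed between constant multiples of powers of `φ`
(`φ ^ (m - 2) ≤ F_m ≤ φ ^ (m - 1)` and `φ ^ (n - 1) ≤ L_n ≤ 2 φ ^ n`), which turns these into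
`φ ^ (m + k) < φ ^ (n + 5)` and `φ ^ n ≤ 2 (b + 1) φ ^ (m + k) < b ^ 3 φ ^ (m + k)`.
Comparing exponents and using `3 < 7 log φ` gives the two bounds.
-/

def lucas : ℕ → ℕ
  | 0 => 2
  | 1 => 1
  | n + 2 => lucas (n + 1) + lucas n

open Real goldenRatio

theorem lucas_pos (n : ℕ) : 0 < lucas n := by
  induction n using Nat.twoStepInduction with
  | zero => decide
  | one => decide
  | more n _ ih => rw [lucas]; omega

theorem le_mul_goldenRatio_pow_of_fibRec {u : ℕ → ℝ} (hu : ∀ n, u (n + 2) = u (n + 1) + u n)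
    {c : ℝ} (h0 : u 0 ≤ c) (h1 : u 1 ≤ c * φ) (n : ℕ) : u n ≤ c * φ ^ n := by
  induction n using Nat.twoStepInduction with
  | zero => simpa using h0
  | one => simpa using h1
  | more n ih ih' =>
    calc u (n + 2) = u (n + 1) + u n := hu n
      _ ≤ c * φ ^ (n + 1) + c * φ ^ n := add_le_add ih' ih
      _ = c * φ ^ (n + 2) := by rw [← goldenRatio_pow_sub_goldenRatio_pow n]; ring

theorem mul_goldenRatio_pow_le_of_fibRec {u : ℕ → ℝ} (hu : ∀ n, u (n + 2) = u (n + 1) + u n)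
    {c : ℝ} (h0 : c ≤ u 0) (h1 : c * φ ≤ u 1) (n : ℕ) : c * φ ^ n ≤ u n := by
  have := le_mul_goldenRatio_pow_of_fibRec (u := fun n => -u n) (c := -c)
    (fun n => by rw [hu]; ring) (neg_le_neg h0) (by linarith) n
  linarith

theorem lucas_le_two_mul_goldenRatio_pow (n : ℕ) : (lucas n : ℝ) ≤ 2 * φ ^ n :=
  le_mul_goldenRatio_pow_of_fibRec (u := fun n => (lucas n : ℝ))
    (fun n => by simp only [lucas, Nat.cast_add]) (by norm_num [lucas])
    (by norm_num [lucas]; linarith [one_lt_goldenRatio]) n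

theorem goldenRatio_pow_le_goldenRatio_mul_lucas (n : ℕ) : φ ^ n ≤ φ * lucas n := by
  have := mul_goldenRatio_pow_le_of_fibRec (u := fun n => (lucas n : ℝ)) (c := φ⁻¹)
    (fun n => by simp only [lucas, Nat.cast_add])
    (show φ⁻¹ ≤ ((2 : ℕ) : ℝ) by push_cast; linarith [inv_lt_one_of_one_lt₀ one_lt_goldenRatio])
    (show φ⁻¹ * φ ≤ ((1 : ℕ) : ℝ) by rw [inv_mul_cancel₀ goldenRatio_ne_zero, Nat.cast_one]) n
  rwa [inv_mul_le_iff₀ goldenRatio_pos] at this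

theorem fib_succ_le_goldenRatio_pow (n : ℕ) : (Nat.fib (n + 1) : ℝ) ≤ φ ^ n := by
  simpa using le_mul_goldenRatio_pow_of_fibRec (u := fun n => (Nat.fib (n + 1) : ℝ)) (c := 1)
    (fun n => by simp only [Nat.fib_add_two, Nat.cast_add]; ring) (by simp)
    (by simp [Nat.fib_add_two, one_lt_goldenRatio.le]) n

theorem goldenRatio_pow_le_goldenRatio_mul_fib_succ (n : ℕ) : φ ^ n ≤ φ * Nat.fib (n + 1) := by
  have := mul_goldenRatio_pow_le_of_fibRec (u := fun n => (Nat.fib (n + 1) : ℝ)) (c := φ⁻¹)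
    (fun n => by simp only [Nat.fib_add_two, Nat.cast_add]; ring)
    (by simpa using (inv_lt_one_of_one_lt₀ one_lt_goldenRatio).le)
    (show φ⁻¹ * φ ≤ ((Nat.fib 2 : ℕ) : ℝ) by
      rw [inv_mul_cancel₀ goldenRatio_ne_zero, Nat.fib_two, Nat.cast_one]) n
  rwa [inv_mul_le_iff₀ goldenRatio_pos] at this

theorem mul_lt_mul_pow_log_succ_add {b x : ℕ} (y : ℕ) (hb : 1 < b) (hx : 0 < x) :
    y * x < y * b ^ (Nat.log b x + 1) + x :=
  calc y * x ≤ y * b ^ (Nat.log b x + 1) :=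
        Nat.mul_le_mul_left y (Nat.lt_pow_succ_log_self hb x).le
    _ < y * b ^ (Nat.log b x + 1) + x := Nat.lt_add_of_pos_right hx

theorem mul_pow_log_succ_add_le {b x y : ℕ} (hx : 0 < x) (hy : 0 < y) :
    y * b ^ (Nat.log b x + 1) + x ≤ (b + 1) * (y * x) := by
  have hpow : b ^ (Nat.log b x + 1) ≤ b * x := by
    rw [pow_succ']
    exact Nat.mul_le_mul_left b (Nat.pow_log_le_self b hx.ne')
  calc y * b ^ (Nat.log b x + 1) + x ≤ y * (b * x) + y * x :=
        add_le_add (Nat.mul_le_mul_left y hpow) (Nat.le_mul_of_pos_left x hy)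
    _ = (b + 1) * (y * x) := by ring

theorem lt_add_four_of_fib_succ_mul_lucas_lt {p k n : ℕ}
    (h : (Nat.fib (p + 1) : ℝ) * lucas k < lucas n) : p + k < n + 4 := by
  have hφ2 : 2 < φ ^ 2 := by rw [goldenRatio_sq]; linarith [one_lt_goldenRatio]
  refine (pow_lt_pow_iff_right₀ one_lt_goldenRatio).mp ?_
  calc φ ^ (p + k) = φ ^ p * φ ^ k := pow_add φ p k
    _ ≤ (φ * Nat.fib (p + 1)) * (φ * lucas k) :=
      mul_le_mul (goldenRatio_pow_le_goldenRatio_mul_fib_succ p)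
        (goldenRatio_pow_le_goldenRatio_mul_lucas k) (by positivity) (by positivity)
    _ = φ ^ 2 * (Nat.fib (p + 1) * lucas k) := by ring
    _ < φ ^ 2 * (2 * φ ^ n) :=
      mul_lt_mul_of_pos_left (h.trans_le (lucas_le_two_mul_goldenRatio_pow n)) (by positivity)
    _ < φ ^ 2 * (φ ^ 2 * φ ^ n) := by gcongr
    _ = φ ^ (n + 4) := by ring

theorem goldenRatio_pow_le_of_lucas_le_mul {n p k : ℕ} {B : ℝ} (hB : 0 ≤ B)
    (h : (lucas n : ℝ) ≤ B * (Nat.fib (p + 1) * lucas k)) :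
    φ ^ n ≤ 2 * B * φ ^ (p + 1 + k) :=
  calc φ ^ n ≤ φ * lucas n := goldenRatio_pow_le_goldenRatio_mul_lucas n
    _ ≤ φ * (B * (Nat.fib (p + 1) * lucas k)) := by gcongr
    _ ≤ φ * (B * (φ ^ p * (2 * φ ^ k))) := by
      gcongr
      · exact fib_succ_le_goldenRatio_pow p
      · exact lucas_le_two_mul_goldenRatio_pow k
    _ = 2 * B * φ ^ (p + 1 + k) := by ring

theorem three_lt_seven_mul_log_goldenRatio : 3 < 7 * log φ := by
  have hφ7 : φ ^ 7 = 13 * φ + 8 := by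
    rw [← goldenRatio_mul_fib_succ_add_fib 6]
    norm_num [Nat.fib_add_two]
    ring
  have he3 : exp 3 < 27 := by
    have h : exp 3 = exp 1 ^ 3 := by rw [exp_one_pow]; norm_num
    rw [h, show (27 : ℝ) = 3 ^ 3 by norm_num]
    gcongr
    linarith [exp_one_lt_d9]
  have hlog : log (φ ^ 7) = 7 * log φ := by rw [log_pow]; norm_num
  have hφ : 3 / 2 < φ := by nlinarith [goldenRatio_sq, one_lt_goldenRatio]
  rw [← hlog, lt_log_iff_exp_lt (by positivity), hφ7]
  linarith

theorem lt_add_seven_mul_log_of_goldenRatio_pow_lt {n j : ℕ} {b : ℝ} (hb : 1 < b)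
    (h : φ ^ n < b ^ 3 * φ ^ j) : (n : ℝ) < j + 7 * log b := by
  have hlog := log_lt_log (by positivity) h
  rw [log_mul (by positivity) (by positivity), log_pow, log_pow, log_pow] at hlog
  push_cast at hlog
  have hlogb := log_pos hb
  have hlogφ := log_pos one_lt_goldenRatio
  by_contra! hcon
  nlinarith [mul_le_mul_of_nonneg_right hcon hlogφ.le,
    mul_lt_mul_of_pos_right three_lt_seven_mul_log_goldenRatio hlogb]

theorem concat_fib_lucas_n_bounds_general (n m k b d : ℕ) (hm : 0 < m)
    (hb : 2 ≤ b) (hd : d = Nat.log b (lucas k) + 1)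
    (heq : lucas n = Nat.fib m * b ^ d + lucas k) :
    (m : ℝ) + k - 5 < n ∧ (n : ℝ) < m + k + 7 * Real.log b := by
  obtain ⟨p, rfl⟩ : ∃ p, m = p + 1 := ⟨m - 1, by omega⟩
  subst hd
  have hlow : Nat.fib (p + 1) * lucas k < lucas n :=
    heq ▸ mul_lt_mul_pow_log_succ_add _ hb (lucas_pos k)
  have hup : lucas n ≤ (b + 1) * (Nat.fib (p + 1) * lucas k) :=
    heq ▸ mul_pow_log_succ_add_le (lucas_pos k) (Nat.fib_pos.mpr p.succ_pos)
  have hbR : (2 : ℝ) ≤ b := by exact_mod_cast hb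
  constructor
  · have hexp := lt_add_four_of_fib_succ_mul_lucas_lt (by exact_mod_cast hlow)
    have hexpR : (p + k : ℝ) < n + 4 := by exact_mod_cast hexp
    push_cast
    linarith
  · have hpow := goldenRatio_pow_le_of_lucas_le_mul (B := b + 1) (by positivity)
      (by exact_mod_cast hup)
    have hcube : 2 * ((b : ℝ) + 1) < b ^ 3 := by
      nlinarith [mul_nonneg (sub_nonneg.2 hbR) (by positivity : (0 : ℝ) ≤ b ^ 2 + 2 * b + 2)]
    have hlt := lt_add_seven_mul_log_of_goldenRatio_pow_lt (by linarith)
      (hpow.trans_lt (mul_lt_mul_of_pos_right hcube (by positivity)))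
    push_cast at hlt ⊢
    linarith

theorem concat_fib_lucas_n_bounds (n m k b d : ℕ) (hm : 0 < m)
    (hb : 2 ≤ b) (hb' : b ≤ 10) (hd : d = Nat.log b (lucas k) + 1)
    (heq : lucas n = Nat.fib m * b ^ d + lucas k) :
    (m : ℝ) + k - 5 < n ∧ (n : ℝ) < m + k + 7 * Real.log b :=
  concat_fib_lucas_n_bounds_general n m k b d hm hb hd heq
end

section
/- Suppose n, m, k, d are non-negative integers with n ≥ 2, 2 ≤ b ≤ 10, F_k ≥ 1, d the number of base-b digits of F_k, and L_n = L_m·b^d + F_k. Then |1 - b^d/α^(n-m)| < 2b/α^(n-k), where α = (1+√5)/2. -/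
/-!
By Binet's formulas the equation `L_n = L_m b^d + F_k` becomes
`φ^n - b^d φ^m = F_k - ψ^n + b^d ψ^m`, whose right side is at most `F_k + 1 + b^d` in absolute
value since `|ψ| < 1`. As `b^(d-1) ≤ F_k`, this is at most `2 b F_k < 2 b φ^k`; dividing by `φ^n`
gives the claim.
-/

open Real goldenRatio

lemma coe_lucas_eq (n : ℕ) : (lucas n : ℝ) = φ ^ n + ψ ^ n := by
  induction n using Nat.twoStepInduction with
  | zero => norm_num [lucas]
  | one => simp [lucas, goldenRatio_add_goldenConj]
  | more n ih₁ ih₀ =>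
    have hφ : φ ^ (n + 2) = φ ^ n * (φ + 1) := by rw [← goldenRatio_sq]; ring
    have hψ : ψ ^ (n + 2) = ψ ^ n * (ψ + 1) := by rw [← goldenConj_sq]; ring
    rw [lucas, Nat.cast_add, ih₁, ih₀, hφ, hψ]
    ring

lemma abs_goldenConj_pow_le_one (n : ℕ) : |ψ ^ n| ≤ 1 := by
  have hψ : |ψ| < 1 := abs_lt.mpr ⟨neg_one_lt_goldenConj, goldenConj_neg.trans one_pos⟩
  rw [abs_pow]
  exact pow_le_one₀ (abs_nonneg _) hψ.le

lemma fib_lt_goldenRatio_pow (k : ℕ) : (Nat.fib k : ℝ) < φ ^ k := by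
  have hsqrt5 : (2 : ℝ) < √5 := by
    rw [show (2 : ℝ) = √(2 ^ 2) by simp]
    exact Real.sqrt_lt_sqrt (by norm_num) (by norm_num)
  have hφk : 1 ≤ φ ^ k := one_le_pow₀ one_lt_goldenRatio.le
  have hψk := (abs_le.mp (abs_goldenConj_pow_le_one k)).1
  rw [coe_fib_eq, div_lt_iff₀ (by linarith)]
  nlinarith

lemma abs_goldenRatio_pow_sub_mul_le {n m c f : ℕ} (h : lucas n = lucas m * c + f) :
    |φ ^ n - c * φ ^ m| ≤ f + 1 + c := by
  have hR : (lucas n : ℝ) = lucas m * c + f := by exact_mod_cast h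
  rw [coe_lucas_eq, coe_lucas_eq] at hR
  have hform : φ ^ n - c * φ ^ m = f - ψ ^ n + c * ψ ^ m := by linarith
  have hcψ : |(c : ℝ) * ψ ^ m| ≤ c := by
    rw [abs_mul, Nat.abs_cast]
    exact mul_le_of_le_one_right c.cast_nonneg (abs_goldenConj_pow_le_one m)
  calc |φ ^ n - c * φ ^ m| ≤ |(f : ℝ)| + |ψ ^ n| + |c * ψ ^ m| := by
        simpa only [hform, sub_eq_add_neg, abs_neg] using abs_add_three (f : ℝ) (-ψ ^ n) _
    _ ≤ f + 1 + c := by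
        rw [Nat.abs_cast]; linarith [abs_goldenConj_pow_le_one n]

lemma div_zpow_natCast_sub {x : ℝ} (hx : x ≠ 0) (a : ℝ) (n m : ℕ) :
    a / x ^ ((n : ℤ) - m) = a * x ^ m / x ^ n := by
  rw [zpow_sub₀ hx, zpow_natCast, zpow_natCast, div_div_eq_mul_div]

theorem gamma1_bound_general (n m k b d : ℕ) (hb : 2 ≤ b)
    (hk : 1 ≤ Nat.fib k) (hd : d = Nat.log b (Nat.fib k) + 1)
    (heq : lucas n = lucas m * b ^ d + Nat.fib k) :
    |1 - (b : ℝ) ^ d / ((1 + Real.sqrt 5) / 2) ^ ((n : ℤ) - m)| <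
      2 * b / ((1 + Real.sqrt 5) / 2) ^ ((n : ℤ) - k) := by
  have hbd : (b : ℝ) ^ d ≤ b * Nat.fib k := by
    rw [hd, pow_succ']
    exact_mod_cast Nat.mul_le_mul_left b (Nat.pow_log_le_self b (by omega))
  have hbR : (2 : ℝ) ≤ b := by exact_mod_cast hb
  have hkR : (1 : ℝ) ≤ Nat.fib k := by exact_mod_cast hk
  have hform : |φ ^ n - b ^ d * φ ^ m| < 2 * b * φ ^ k :=
    calc |φ ^ n - b ^ d * φ ^ m| ≤ Nat.fib k + 1 + b ^ d := by
          exact_mod_cast abs_goldenRatio_pow_sub_mul_le heq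
      _ ≤ 2 * b * Nat.fib k := by nlinarith
      _ < 2 * b * φ ^ k := by gcongr; exact fib_lt_goldenRatio_pow k
  have hφn : 0 < φ ^ n := pow_pos goldenRatio_pos n
  rw [show (1 + √5) / 2 = φ from rfl, div_zpow_natCast_sub goldenRatio_ne_zero,
    div_zpow_natCast_sub goldenRatio_ne_zero, one_sub_div hφn.ne', abs_div, abs_of_pos hφn,
    div_lt_div_iff_of_pos_right hφn]
  linarith

theorem gamma1_bound (n m k b d : ℕ) (hn : 2 ≤ n) (hb : 2 ≤ b) (hb' : b ≤ 10)
    (hk : 1 ≤ Nat.fib k) (hd : d = Nat.log b (Nat.fib k) + 1)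
    (heq : lucas n = lucas m * b ^ d + Nat.fib k) :
    |1 - (b : ℝ) ^ d / ((1 + Real.sqrt 5) / 2) ^ ((n : ℤ) - m)| <
      2 * b / ((1 + Real.sqrt 5) / 2) ^ ((n : ℤ) - k) :=
  gamma1_bound_general n m k b d hb hk hd heq
end
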